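/- arXiv:1511.00049 — 6 statements merged into one kernel-verified Lean document; each statement's English description precedes it below -/
import Mathlib

section
/- Let S_1, ..., S_r be subsets of a finite set E such that every element of E is contained in exactly two of the sets. For 1 ≤ k_0 ≤ r, Σ_{k = k_0}^{r} |S_k \ (S_1 ∪ ... ∪ S_{k-1})| ≤ Σ_{j = k_0}^{r} |S_j ∩ (S_1 ∪ ... ∪ S_{j-1})|, where for k = 1 the set S_1 \ (S_1 ∪ ... ∪ S_0) is interpreted as S_1. -/
theorem stmt3 {α : Type*} [DecidableEq α] (E : Finset α) {r : ℕ} (S : Fin r → Finset α)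
    (hsub : ∀ k, S k ⊆ E)
    (h2 : ∀ x ∈ E, (Finset.univ.filter (fun k => x ∈ S k)).card = 2)
    (k₀ : Fin r) :
    ∑ k ∈ Finset.Ici k₀, ((S k) \ ((Finset.Iio k).biUnion S)).card ≤
      ∑ j ∈ Finset.Ici k₀, ((S j) ∩ ((Finset.Iio j).biUnion S)).card := by
  classical
  have key : ∀ (A : Finset α), A ⊆ E → A.card = ∑ x ∈ E, if x ∈ A then 1 else 0 := by
    intro A hA
    rw [← Finset.card_filter]
    congr 1
    rw [Finset.filter_mem_eq_inter, Finset.inter_eq_right.mpr hA]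
  have hrw1 : ∀ k : Fin r, ((S k) \ ((Finset.Iio k).biUnion S)).card
      = ∑ x ∈ E, if x ∈ (S k) \ ((Finset.Iio k).biUnion S) then 1 else 0 :=
    fun k => key _ (Finset.sdiff_subset.trans (hsub k))
  have hrw2 : ∀ j : Fin r, ((S j) ∩ ((Finset.Iio j).biUnion S)).card
      = ∑ x ∈ E, if x ∈ (S j) ∩ ((Finset.Iio j).biUnion S) then 1 else 0 :=
    fun j => key _ (Finset.inter_subset_left.trans (hsub j))
  simp only [hrw1, hrw2]
  rw [Finset.sum_comm, Finset.sum_comm (s := Finset.Ici k₀)]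
  apply Finset.sum_le_sum
  intro x hx
  rw [← Finset.card_filter, ← Finset.card_filter]
  -- x lies in exactly two sets
  obtain ⟨a, b, hab, hT⟩ := Finset.card_eq_two.mp (h2 x hx)
  have hmem : ∀ k : Fin r, x ∈ S k ↔ k = a ∨ k = b := by
    intro k
    have : x ∈ S k ↔ k ∈ ({a, b} : Finset (Fin r)) := by
      rw [← hT]; simp
    simpa using this
  have main : ∀ k₁ k₂ : Fin r, k₁ < k₂ → (∀ k : Fin r, x ∈ S k ↔ k = k₁ ∨ k = k₂) →
      (Finset.filter (fun i => x ∈ S i \ (Finset.Iio i).biUnion S) (Finset.Ici k₀)).card ≤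
        (Finset.filter (fun i => x ∈ S i ∩ (Finset.Iio i).biUnion S) (Finset.Ici k₀)).card := by
    intro k₁ k₂ hlt hm
    have hsubL : Finset.filter (fun i => x ∈ S i \ (Finset.Iio i).biUnion S) (Finset.Ici k₀)
        ⊆ {k₁} := by
      intro k hk
      simp only [Finset.mem_filter, Finset.mem_Ici, Finset.mem_sdiff, Finset.mem_biUnion,
        Finset.mem_Iio] at hk
      obtain ⟨hk₀, hxk, hnot⟩ := hk
      rcases (hm k).mp hxk with rfl | rfl
      · simp
      · exact absurd ⟨k₁, hlt, (hm k₁).mpr (Or.inl rfl)⟩ hnot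
    rcases Finset.eq_empty_or_nonempty
        (Finset.filter (fun i => x ∈ S i \ (Finset.Iio i).biUnion S) (Finset.Ici k₀)) with he | hne
    · rw [he, Finset.card_empty]; exact Nat.zero_le _
    · have h1 : (Finset.filter (fun i => x ∈ S i \ (Finset.Iio i).biUnion S) (Finset.Ici k₀)).card
          ≤ 1 := by
        calc _ ≤ ({k₁} : Finset (Fin r)).card := Finset.card_le_card hsubL
        _ = 1 := Finset.card_singleton k₁
      have hk₁mem : k₁ ∈ Finset.filter (fun i => x ∈ S i \ (Finset.Iio i).biUnion S)
          (Finset.Ici k₀) := by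
        obtain ⟨k, hk⟩ := hne
        have := hsubL hk
        simp only [Finset.mem_singleton] at this
        subst this; exact hk
      have hk₀le : k₀ ≤ k₁ := (Finset.mem_filter.mp hk₁mem).1 |> Finset.mem_Ici.mp
      have hk₂mem : k₂ ∈ Finset.filter (fun i => x ∈ S i ∩ (Finset.Iio i).biUnion S)
          (Finset.Ici k₀) := by
        simp only [Finset.mem_filter, Finset.mem_Ici, Finset.mem_inter, Finset.mem_biUnion,
          Finset.mem_Iio]
        exact ⟨le_of_lt (lt_of_le_of_lt hk₀le hlt),
          (hm k₂).mpr (Or.inr rfl), k₁, hlt, (hm k₁).mpr (Or.inl rfl)⟩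
      calc _ ≤ 1 := h1
      _ ≤ _ := Finset.card_pos.mpr ⟨k₂, hk₂mem⟩
  rcases lt_or_gt_of_ne hab with hlt | hgt
  · exact main a b hlt hmem
  · exact main b a hgt (fun k => (hmem k).trans or_comm)
end

section
/- Let S_1, ..., S_r be subsets of a finite set E such that every element of E lies in exactly two of the sets. Then for any Λ ⊆ {1,...,r} and any 1 ≤ k_0 ≤ r, Σ_{k ∈ Λ} |S_k \ (S_1 ∪ ... ∪ S_{k-1})| ≥ (1/2)( Σ_{k < k_0, k ∈ Λ} |S_k| − Σ_{k < k_0, k ∈ Λ^c} |S_k| ), where for k = 1 the term is |S_1| and Λ^c = {1,...,r} \ Λ. -/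
open Finset

private lemma two_sum {r : ℕ} (s : Finset (Fin r)) (a b : Fin r) (hab : a ≠ b) :
    (∑ k ∈ s, (if k = a ∨ k = b then (1:ℚ) else 0)) =
      (if a ∈ s then (1:ℚ) else 0) + (if b ∈ s then 1 else 0) := by
  have h : ∀ k, (if k = a ∨ k = b then (1:ℚ) else 0) =
      (if k = a then (1:ℚ) else 0) + (if k = b then 1 else 0) := by
    intro k
    by_cases h1 : k = a <;> by_cases h2 : k = b <;> simp_all
  simp_rw [h, Finset.sum_add_distrib]
  rw [Finset.sum_ite_eq' s a (fun _ => (1:ℚ)), Finset.sum_ite_eq' s b (fun _ => (1:ℚ))]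

private lemma pt {r : ℕ} (Λ : Finset (Fin r)) (k₀ a b : Fin r) (hab : a < b) :
    (if a ∈ Λ then (1:ℚ) else 0) ≥ 1/2 *
      (((if a ∈ Finset.Iio k₀ ∩ Λ then (1:ℚ) else 0) + (if b ∈ Finset.Iio k₀ ∩ Λ then 1 else 0))
      - ((if a ∈ Finset.Iio k₀ \ Λ then (1:ℚ) else 0) + (if b ∈ Finset.Iio k₀ \ Λ then 1 else 0))) := by
  have hk : b < k₀ → a < k₀ := fun h => hab.trans h
  simp only [mem_inter, mem_sdiff, mem_Iio]
  by_cases h1 : a ∈ Λ <;> by_cases h2 : b ∈ Λ <;> by_cases h3 : a < k₀ <;>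
    by_cases h4 : b < k₀ <;>
    first
      | exact absurd (hk h4) h3
      | (simp [h1, h2, h3, h4]; norm_num)
      | simp [h1, h2, h3, h4]


private lemma main_ineq {α : Type*} [DecidableEq α] {r : ℕ} (S : Fin r → Finset α) {x : α}
    (Λ : Finset (Fin r)) (k₀ a b : Fin r) (hab : a < b)
    (hmem : ∀ k, x ∈ S k ↔ (k = a ∨ k = b)) :
    1/2 * ((∑ k ∈ Finset.Iio k₀ ∩ Λ, (if x ∈ S k then (1:ℚ) else 0))
        - (∑ k ∈ Finset.Iio k₀ \ Λ, (if x ∈ S k then (1:ℚ) else 0))) ≤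
      ∑ k ∈ Λ, (if x ∈ (S k) \ ((Finset.Iio k).biUnion S) then (1:ℚ) else 0) := by
  have hfirst : ∀ k, (x ∈ (S k) \ ((Finset.Iio k).biUnion S)) ↔ k = a := by
    intro k
    simp only [Finset.mem_sdiff, Finset.mem_biUnion, Finset.mem_Iio, hmem]
    constructor
    · rintro ⟨rfl | rfl, h⟩
      · rfl
      · exact absurd ⟨a, hab, Or.inl rfl⟩ h
    · rintro rfl
      exact ⟨Or.inl rfl, by rintro ⟨j, hj, rfl | rfl⟩ <;> exact absurd hj (by simp [hab.not_gt, asymm hab])⟩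
  simp_rw [hfirst, hmem]
  rw [Finset.sum_ite_eq' Λ a (fun _ => (1:ℚ)),
    two_sum _ a b hab.ne, two_sum _ a b hab.ne]
  exact pt Λ k₀ a b hab

theorem stmt4 {α : Type*} [DecidableEq α] (E : Finset α) {r : ℕ} (S : Fin r → Finset α)
    (hsub : ∀ k, S k ⊆ E)
    (h2 : ∀ x ∈ E, (Finset.univ.filter (fun k => x ∈ S k)).card = 2)
    (Λ : Finset (Fin r)) (k₀ : Fin r) :
    (∑ k ∈ Λ, (((S k) \ ((Finset.Iio k).biUnion S)).card : ℚ)) ≥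
      (1 / 2) * ((∑ k ∈ Finset.Iio k₀ ∩ Λ, ((S k).card : ℚ)) -
        (∑ k ∈ Finset.Iio k₀ \ Λ, ((S k).card : ℚ))) := by
  have hcard : ∀ t : Finset α, t ⊆ E → (t.card : ℚ) = ∑ x ∈ E, (if x ∈ t then (1:ℚ) else 0) := by
    intro t ht
    rw [Finset.sum_ite_mem, Finset.inter_eq_right.mpr ht, Finset.sum_const, nsmul_eq_mul, mul_one]
  have e1 : (∑ k ∈ Λ, (((S k) \ ((Finset.Iio k).biUnion S)).card : ℚ)) =
      ∑ x ∈ E, ∑ k ∈ Λ, (if x ∈ (S k) \ ((Finset.Iio k).biUnion S) then (1:ℚ) else 0) := by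
    rw [Finset.sum_comm]
    exact Finset.sum_congr rfl fun k _ =>
      hcard _ ((Finset.sdiff_subset).trans (hsub k))
  have e2 : (∑ k ∈ Finset.Iio k₀ ∩ Λ, ((S k).card : ℚ)) =
      ∑ x ∈ E, ∑ k ∈ Finset.Iio k₀ ∩ Λ, (if x ∈ S k then (1:ℚ) else 0) := by
    rw [Finset.sum_comm]
    exact Finset.sum_congr rfl fun k _ => hcard _ (hsub k)
  have e3 : (∑ k ∈ Finset.Iio k₀ \ Λ, ((S k).card : ℚ)) =
      ∑ x ∈ E, ∑ k ∈ Finset.Iio k₀ \ Λ, (if x ∈ S k then (1:ℚ) else 0) := by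
    rw [Finset.sum_comm]
    exact Finset.sum_congr rfl fun k _ => hcard _ (hsub k)
  rw [e1, e2, e3, ← Finset.sum_sub_distrib, Finset.mul_sum]
  apply Finset.sum_le_sum
  intro x hx
  -- get the two indices
  obtain ⟨a, b, hne, hT⟩ := Finset.card_eq_two.mp (h2 x hx)
  have hmem : ∀ k, x ∈ S k ↔ (k = a ∨ k = b) := by
    intro k
    have h := Finset.ext_iff.mp hT k
    simpa using h
  -- wlog a < b
  rcases hne.lt_or_gt with hab | hab
  · exact main_ineq S Λ k₀ a b hab hmem
  · exact main_ineq S Λ k₀ b a hab (fun k => (hmem k).trans or_comm)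
end

section
/- Let m ≥ 1 and let Λ_1, Λ_2 be subsets of {1,...,m}. If for every l ∈ {1,...,m} we have |[l,m] ∩ Λ_1| ≤ |[l,m] ∩ Λ_2|, then there exists a strictly increasing function f : Λ_1 → Λ_2 with f(k) ≥ k for every k ∈ Λ_1. -/
/-!
Send the `i`-th largest element of `Λ₁` to the `i`-th largest element of `Λ₂`; this is strictly
increasing, and `f k` has exactly as many elements of `Λ₂` above it as `k` has elements of `Λ₁`
above it. If `f k < k`, then `Λ₂ ∩ [k, m]` misses `f k`, so it has fewer elements than
`Λ₂ ∩ [f k, m]`, hence fewer than `Λ₁ ∩ [k, m]`, against the hypothesis at `l = k`.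
-/

open Finset

section
variable {α : Type*} [LinearOrder α] [LocallyFiniteOrderTop α]

theorem Finset.card_le_card_of_card_Ici_inter_le {s t : Finset α}
    (h : ∀ l ∈ s, #(Ici l ∩ s) ≤ #(Ici l ∩ t)) : #s ≤ #t := by
  rcases s.eq_empty_or_nonempty with rfl | hs
  · simp
  have hmin : Ici (s.min' hs) ∩ s = s :=
    inter_eq_right.2 fun x hx => mem_Ici.2 (s.min'_le x hx)
  calc #s = #(Ici (s.min' hs) ∩ s) := by rw [hmin]
    _ ≤ #(Ici (s.min' hs) ∩ t) := h _ (s.min'_mem hs)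
    _ ≤ #t := card_le_card inter_subset_right

theorem Finset.card_Ici_inter_orderIsoOfFin (s : Finset α) {k : ℕ} (h : #s = k) (i : Fin k) :
    #(Ici (s.orderIsoOfFin h i : α) ∩ s) = k - i := by
  rw [← Fin.card_Ici i, ← card_map (s.orderEmbOfFin h).toEmbedding]
  congr 1
  ext x
  simp only [mem_inter, mem_Ici, mem_map, RelEmbedding.coe_toEmbedding, coe_orderIsoOfFin_apply]
  constructor
  · rintro ⟨hix, hx⟩
    refine ⟨s.orderIsoOfFin h |>.symm ⟨x, hx⟩, ?_, ?_⟩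
    · exact (s.orderIsoOfFin h).le_symm_apply.2
        (by rwa [← Subtype.coe_le_coe, coe_orderIsoOfFin_apply])
    · rw [← coe_orderIsoOfFin_apply, OrderIso.apply_symm_apply]
  · rintro ⟨j, hij, rfl⟩
    exact ⟨(s.orderEmbOfFin h).monotone hij, s.orderEmbOfFin_mem h j⟩

theorem Finset.le_of_card_Ici_inter_le {t : Finset α} {x y : α} (hy : y ∈ t)
    (hcard : #(Ici y ∩ t) ≤ #(Ici x ∩ t)) : x ≤ y := by
  by_contra! hyx
  refine (card_lt_card ?_).not_ge hcard
  refine ssubset_iff_of_subset ?_ |>.2 ⟨y, by simp [hy], by simp [hyx]⟩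
  exact inter_subset_inter_right (Ici_subset_Ici.2 hyx.le)

theorem Finset.exists_strictMono_le_of_card_Ici_inter_le {s t : Finset α}
    (h : ∀ l ∈ s, #(Ici l ∩ s) ≤ #(Ici l ∩ t)) :
    ∃ f : s → t, StrictMono f ∧ ∀ k : s, (k : α) ≤ f k := by
  have hst := card_le_card_of_card_Ici_inter_le h
  let e₁ := s.orderIsoOfFin rfl
  let e₂ := t.orderIsoOfFin rfl
  let shift (i : Fin #s) : Fin #t := ⟨i + (#t - #s), by omega⟩
  have shift_strictMono : StrictMono shift := fun i j hij => by
    simp only [shift, Fin.mk_lt_mk]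
    omega
  refine ⟨fun k => e₂ (shift (e₁.symm k)),
    e₂.strictMono.comp (shift_strictMono.comp e₁.symm.strictMono), fun k => ?_⟩
  obtain ⟨i, rfl⟩ := e₁.surjective k
  refine le_of_card_Ici_inter_le (e₂ _).2 ?_
  calc #(Ici (e₂ (shift (e₁.symm (e₁ i))) : α) ∩ t) = #(Ici (e₁ i : α) ∩ s) := by
        rw [e₁.symm_apply_apply, card_Ici_inter_orderIsoOfFin, card_Ici_inter_orderIsoOfFin]
        simp only [shift]
        omega
    _ ≤ #(Ici (e₁ i : α) ∩ t) := h _ (e₁ i).2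

end

theorem stmt5_general {m : ℕ} (Λ₁ Λ₂ : Finset (Fin m))
    (h : ∀ l : Fin m, (Finset.Ici l ∩ Λ₁).card ≤ (Finset.Ici l ∩ Λ₂).card) :
    ∃ f : {k // k ∈ Λ₁} → {k // k ∈ Λ₂},
      StrictMono f ∧ ∀ k : {k // k ∈ Λ₁}, (k : Fin m) ≤ (f k : Fin m) :=
  exists_strictMono_le_of_card_Ici_inter_le fun l _ => h l

theorem stmt5 {m : ℕ} (hm : 1 ≤ m) (Λ₁ Λ₂ : Finset (Fin m))
    (h : ∀ l : Fin m, (Finset.Ici l ∩ Λ₁).card ≤ (Finset.Ici l ∩ Λ₂).card) :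
    ∃ f : {k // k ∈ Λ₁} → {k // k ∈ Λ₂},
      StrictMono f ∧ ∀ k : {k // k ∈ Λ₁}, (k : Fin m) ≤ (f k : Fin m) :=
  stmt5_general Λ₁ Λ₂ h
end

section
/- Let S_1, ..., S_r be subsets of a finite set E such that every element of E lies in exactly two of the sets, and assume |S_1| ≤ |S_2| ≤ ... ≤ |S_r|. Then for every Λ ⊆ {1,...,r}, Σ_{k ∈ Λ} |S_k \ (S_1 ∪ ... ∪ S_{k-1})| ≥ (1/2) |S_1| (|Λ| − |Λ^c|), where Λ^c = {1,...,r} \ Λ and for k = 1 the term is |S_1|. -/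
theorem stmt6 {α : Type*} [DecidableEq α] (E : Finset α) {r : ℕ} (hr : 0 < r)
    (S : Fin r → Finset α)
    (hsub : ∀ k, S k ⊆ E)
    (h2 : ∀ x ∈ E, (Finset.univ.filter (fun k => x ∈ S k)).card = 2)
    (hmono : Monotone (fun k => (S k).card))
    (Λ : Finset (Fin r)) :
    (∑ k ∈ Λ, (((S k) \ ((Finset.Iio k).biUnion S)).card : ℚ)) ≥
      (1 / 2) * ((S ⟨0, hr⟩).card : ℚ) * ((Λ.card : ℚ) - (Λᶜ.card : ℚ)) := by
  rw [ge_iff_le]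
  have hd : ∀ k, ((S ⟨0, hr⟩).card : ℚ) ≤ ((S k).card : ℚ) := by
    intro k
    have : (S ⟨0, hr⟩).card ≤ (S k).card := hmono (show (⟨0, hr⟩ : Fin r) ≤ k by
      simp [Fin.le_def])
    exact_mod_cast this
  rcases Nat.eq_zero_or_pos (S ⟨0, hr⟩).card with h0 | hm0'
  · rw [h0]
    push_cast
    rw [mul_zero, zero_mul]
    exact Finset.sum_nonneg (fun k _ => by positivity)
  · have hm0 : (0:ℚ) < ((S ⟨0, hr⟩).card : ℚ) := by exact_mod_cast hm0'
    have hdpos : ∀ k, 0 < ((S k).card : ℚ) := fun k => lt_of_lt_of_le hm0 (hd k)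
    set s : Fin r → ℚ := fun k => if k ∈ Λ then 1 else -1 with hs
    set g : Fin r → ℚ := fun k =>
      s k * ((S ⟨0, hr⟩).card : ℚ) / (2 * ((S k).card : ℚ)) with hg
    have hsle : ∀ k, s k ≤ 1 := by
      intro k; simp only [hs]; split <;> norm_num
    have hgbound : ∀ k, g k ≤ ((S ⟨0, hr⟩).card : ℚ) / (2 * ((S k).card : ℚ)) := by
      intro k
      have hden : (0:ℚ) < 2 * ((S k).card : ℚ) := by have := hdpos k; linarith
      simp only [hg]
      rw [div_le_div_iff₀ hden hden]
      have := mul_le_mul_of_nonneg_right (hsle k) hm0.le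
      nlinarith [hden]
    have hghalf : ∀ k, g k ≤ 1 / 2 := by
      intro k
      have h1 := hgbound k
      have hden : (0:ℚ) < 2 * ((S k).card : ℚ) := by have := hdpos k; linarith
      have h2' : ((S ⟨0, hr⟩).card : ℚ) / (2 * ((S k).card : ℚ)) ≤ 1 / 2 := by
        rw [div_le_div_iff₀ hden (by norm_num)]
        nlinarith [hd k]
      linarith
    have key : ∀ x ∈ E,
        (∑ k, (if x ∈ S k then g k else 0)) ≤
        ∑ k ∈ Λ, (if x ∈ S k \ ((Finset.Iio k).biUnion S) then (1:ℚ) else 0) := by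
      intro x hx
      obtain ⟨i, j, hij, hF⟩ : ∃ i j, i < j ∧
          Finset.univ.filter (fun k => x ∈ S k) = {i, j} := by
        obtain ⟨a, b, hab, h⟩ := Finset.card_eq_two.mp (h2 x hx)
        rcases hab.lt_or_gt with hlt | hlt
        · exact ⟨a, b, hlt, h⟩
        · exact ⟨b, a, hlt, by rw [h, Finset.pair_comm]⟩
      have hmem : ∀ k, x ∈ S k ↔ (k = i ∨ k = j) := by
        intro k
        constructor
        · intro hk
          have : k ∈ Finset.univ.filter (fun k => x ∈ S k) := by
            simp [Finset.mem_filter, hk]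
          rw [hF] at this
          simpa using this
        · rintro (rfl | rfl)
          · have : k ∈ ({k, j} : Finset (Fin r)) := by simp
            rw [← hF] at this
            exact (Finset.mem_filter.mp this).2
          · have : k ∈ ({i, k} : Finset (Fin r)) := by simp
            rw [← hF] at this
            exact (Finset.mem_filter.mp this).2
      have hsum : (∑ k, (if x ∈ S k then g k else 0)) = g i + g j := by
        rw [← Finset.sum_filter, hF, Finset.sum_pair hij.ne]
      rw [hsum]
      have hdij : ((S i).card : ℚ) ≤ ((S j).card : ℚ) := by
        exact_mod_cast hmono hij.le
      by_cases hiΛ : i ∈ Λ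
      · have hxTi : x ∈ S i \ ((Finset.Iio i).biUnion S) := by
          rw [Finset.mem_sdiff]
          refine ⟨(hmem i).mpr (Or.inl rfl), ?_⟩
          intro hcon
          obtain ⟨k, hk, hxk⟩ := Finset.mem_biUnion.mp hcon
          rw [Finset.mem_Iio] at hk
          rcases (hmem k).mp hxk with rfl | rfl
          · exact absurd hk (lt_irrefl _)
          · exact absurd (hk.trans hij) (lt_irrefl _)
        have h1le : (1:ℚ) ≤ ∑ k ∈ Λ,
            (if x ∈ S k \ ((Finset.Iio k).biUnion S) then (1:ℚ) else 0) := by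
          have := Finset.single_le_sum
            (f := fun k => (if x ∈ S k \ ((Finset.Iio k).biUnion S) then (1:ℚ) else 0))
            (fun k _ => by positivity) hiΛ
          simpa [hxTi] using this
        have hb : g i + g j ≤ 1 := by
          have := hghalf i
          have := hghalf j
          linarith
        linarith
      · have h0le : (0:ℚ) ≤ ∑ k ∈ Λ,
            (if x ∈ S k \ ((Finset.Iio k).biUnion S) then (1:ℚ) else 0) :=
          Finset.sum_nonneg (fun k _ => by positivity)
        have hgi : g i = -(((S ⟨0, hr⟩).card : ℚ) / (2 * ((S i).card : ℚ))) := by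
          simp only [hg, hs, if_neg hiΛ]
          ring
        have hgj := hgbound j
        have hmono2 : ((S ⟨0, hr⟩).card : ℚ) / (2 * ((S j).card : ℚ)) ≤
            ((S ⟨0, hr⟩).card : ℚ) / (2 * ((S i).card : ℚ)) := by
          have hdi : (0:ℚ) < 2 * ((S i).card : ℚ) := by have := hdpos i; linarith
          have hdj : (0:ℚ) < 2 * ((S j).card : ℚ) := by have := hdpos j; linarith
          rw [div_le_div_iff₀ hdj hdi]
          nlinarith [hm0.le]
        linarith
    calc (1 / 2) * ((S ⟨0, hr⟩).card : ℚ) * ((Λ.card : ℚ) - (Λᶜ.card : ℚ))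
        = ∑ k, s k * (((S ⟨0, hr⟩).card : ℚ) / 2) := by
          rw [← Finset.sum_mul]
          have hss : ∑ k, s k = (Λ.card : ℚ) - (Λᶜ.card : ℚ) := by
            rw [← Finset.sum_add_sum_compl Λ s]
            have h1 : ∑ k ∈ Λ, s k = (Λ.card : ℚ) := by
              calc ∑ k ∈ Λ, s k = ∑ _k ∈ Λ, (1:ℚ) :=
                    Finset.sum_congr rfl (fun k hk => by simp only [hs, if_pos hk])
                _ = (Λ.card : ℚ) := by simp
            have h2'' : ∑ k ∈ Λᶜ, s k = -(Λᶜ.card : ℚ) := by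
              calc ∑ k ∈ Λᶜ, s k = ∑ _k ∈ Λᶜ, (-1:ℚ) :=
                    Finset.sum_congr rfl (fun k hk => by
                      simp only [hs, if_neg (Finset.mem_compl.mp hk)])
                _ = -(Λᶜ.card : ℚ) := by simp
            rw [h1, h2'']; ring
          rw [hss]; ring
      _ = ∑ k, g k * ((S k).card : ℚ) := by
          refine Finset.sum_congr rfl (fun k _ => ?_)
          have hne : ((S k).card : ℚ) ≠ 0 := (hdpos k).ne'
          simp only [hg]
          field_simp
      _ = ∑ k, ∑ x ∈ E, (if x ∈ S k then g k else 0) := by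
          refine Finset.sum_congr rfl (fun k _ => ?_)
          rw [← Finset.sum_filter, Finset.filter_mem_eq_inter,
            Finset.inter_eq_right.mpr (hsub k), Finset.sum_const]
          rw [nsmul_eq_mul, mul_comm]
      _ = ∑ x ∈ E, ∑ k, (if x ∈ S k then g k else 0) := Finset.sum_comm
      _ ≤ ∑ x ∈ E, ∑ k ∈ Λ, (if x ∈ S k \ ((Finset.Iio k).biUnion S) then (1:ℚ) else 0) :=
          Finset.sum_le_sum key
      _ = ∑ k ∈ Λ, ∑ x ∈ E, (if x ∈ S k \ ((Finset.Iio k).biUnion S) then (1:ℚ) else 0) :=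
          Finset.sum_comm
      _ = ∑ k ∈ Λ, (((S k) \ ((Finset.Iio k).biUnion S)).card : ℚ) := by
          refine Finset.sum_congr rfl (fun k _ => ?_)
          rw [← Finset.sum_filter, Finset.filter_mem_eq_inter,
            Finset.inter_eq_right.mpr ((Finset.sdiff_subset).trans (hsub k)),
            Finset.sum_const]
          simp
end

section
/- Let S_1, ..., S_r be subsets of a finite set E such that every element of E is contained in exactly two of the sets, with |S_1| ≤ ... ≤ |S_r|. Then for every t ≥ 0, min(t, |S_1|) + min(t, |S_2 \ S_1|) + ... + min(t, |S_r \ (S_1 ∪ ... ∪ S_{r-1})|) ≥ (r/2) · min(t, |S_1|). -/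
/-!
The sets `disjointed S k = S k \ ⋃_{j<k} S j` partition `⋃ S`. With `m = min t |S 0|`, the `k`-th
term is at least `m · |disjointed S k| / |S k|`, so it suffices that
`∑ |disjointed S k| / |S k| ≥ r / 2`. Let every element `x` be charged `1 / |S j|` by each of the
two sets `S j` containing it. The total charge is `r`; on the other hand, if `x ∈ disjointed S k`
then both sets come no earlier than `S k`, hence are at least as large, so `x` is charged at most
`2 / |S k|`.
-/

open Finset

section Disjointed

variable {ι α : Type*} [LinearOrder ι] [LocallyFiniteOrderBot ι] [DecidableEq α] {S : ι → Finset α}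

lemma le_of_mem_disjointed_of_mem {x : α} {k j : ι} (hxk : x ∈ disjointed S k) (hxj : x ∈ S j) :
    k ≤ j := by
  by_contra! hjk
  rw [disjointed_apply, mem_sdiff] at hxk
  exact hxk.2 (le_sup (f := S) (mem_Iio.2 hjk) hxj)

variable [Fintype ι]

lemma sum_sum_disjointed_eq_sum_sup {M : Type*} [AddCommMonoid M] (S : ι → Finset α) (g : α → M) :
    ∑ k, ∑ x ∈ disjointed S k, g x = ∑ x ∈ univ.sup S, g x := by
  rw [← Fintype.sup_disjointed, sup_eq_biUnion,
    sum_biUnion ((disjoint_disjointed S).set_pairwise _)]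

theorem card_le_mul_sum_card_disjointed_div_card (d : ℕ)
    (hd : ∀ x, #{k | x ∈ S k} ≤ d) (hne : ∀ k, (S k).Nonempty)
    (hmono : Monotone fun k ↦ #(S k)) :
    (Fintype.card ι : ℝ) ≤ d * ∑ k, (#(disjointed S k) : ℝ) / #(S k) := by
  have hcard : ∀ k, (0 : ℝ) < #(S k) := fun k ↦ by exact_mod_cast (hne k).card_pos
  have hcharge : ∀ k, ∀ x ∈ disjointed S k,
      ∑ j with x ∈ S j, (1 : ℝ) / #(S j) ≤ d * (1 / #(S k)) := by
    intro k x hx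
    calc ∑ j with x ∈ S j, (1 : ℝ) / #(S j)
        ≤ #{j | x ∈ S j} • (1 / (#(S k) : ℝ)) := by
          refine sum_le_card_nsmul _ _ _ fun j hj ↦ ?_
          have hkj := le_of_mem_disjointed_of_mem hx (mem_filter.1 hj).2
          exact one_div_le_one_div_of_le (hcard k) (mod_cast hmono hkj)
      _ ≤ d * (1 / #(S k)) := by
          rw [nsmul_eq_mul]
          gcongr
          exact_mod_cast hd x
  calc (Fintype.card ι : ℝ)
      = ∑ k, ∑ x ∈ S k, (1 : ℝ) / #(S k) := by
        simp [sum_const, nsmul_eq_mul, (hcard _).ne']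
    _ = ∑ x ∈ univ.sup S, ∑ j with x ∈ S j, (1 : ℝ) / #(S j) :=
        sum_comm' fun k x ↦ by simpa [mem_sup] using fun h ↦ ⟨k, h⟩
    _ = ∑ k, ∑ x ∈ disjointed S k, ∑ j with x ∈ S j, (1 : ℝ) / #(S j) :=
        (sum_sum_disjointed_eq_sum_sup S _).symm
    _ ≤ ∑ k, ∑ x ∈ disjointed S k, d * (1 / (#(S k) : ℝ)) :=
        sum_le_sum fun k _ ↦ sum_le_sum (hcharge k)
    _ = d * ∑ k, (#(disjointed S k) : ℝ) / #(S k) := by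
        simp only [sum_const, nsmul_eq_mul, mul_sum]
        exact sum_congr rfl fun k _ ↦ by ring

end Disjointed

lemma mul_div_le_min {m t a b : ℝ} (hm : 0 ≤ m) (hmt : m ≤ t) (hmb : m ≤ b) (ha : 0 ≤ a)
    (hab : a ≤ b) (hb : 0 < b) : m * (a / b) ≤ min t a := by
  refine le_min ?_ ?_
  · calc m * (a / b) ≤ m * 1 := by gcongr; exact div_le_one_of_le₀ hab hb.le
      _ ≤ t := by linarith
  · calc m * (a / b) = m / b * a := by ring
      _ ≤ 1 * a := by gcongr; exact div_le_one_of_le₀ hmb hb.le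
      _ = a := one_mul a

theorem stmt7 {α : Type*} [DecidableEq α] (E : Finset α) {r : ℕ} (hr : 0 < r)
    (S : Fin r → Finset α)
    (hsub : ∀ k, S k ⊆ E)
    (h2 : ∀ x ∈ E, (Finset.univ.filter (fun k => x ∈ S k)).card = 2)
    (hmono : Monotone (fun k => (S k).card))
    (t : ℝ) (ht : 0 ≤ t) :
    ∑ k, min t ((((S k) \ ((Finset.Iio k).biUnion S)).card : ℝ)) ≥
      ((r : ℝ) / 2) * min t (((S ⟨0, hr⟩).card : ℝ)) := by
  simp only [← sup_eq_biUnion, ← disjointed_apply]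
  have hsum_nonneg : 0 ≤ ∑ k, min t (#(disjointed S k) : ℝ) :=
    sum_nonneg fun k _ ↦ le_min ht (Nat.cast_nonneg _)
  obtain h0 | h0 := (S ⟨0, hr⟩).eq_empty_or_nonempty
  · simpa [h0, ht] using hsum_nonneg
  set m := min t (#(S ⟨0, hr⟩) : ℝ)
  have hm0 : 0 ≤ m := le_min ht (Nat.cast_nonneg _)
  have hcard_le : ∀ k, #(S ⟨0, hr⟩) ≤ #(S k) := fun k ↦ hmono (Nat.zero_le k.val)
  have hm_le : ∀ k, m ≤ #(S k) := fun k ↦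
    (min_le_right _ _).trans (mod_cast hcard_le k)
  have hne : ∀ k, (S k).Nonempty := fun k ↦
    card_pos.1 (h0.card_pos.trans_le (hcard_le k))
  have hd : ∀ x, #{k | x ∈ S k} ≤ 2 := fun x ↦ by
    by_cases hx : x ∈ E
    · exact (h2 x hx).le
    · simp [filter_eq_empty_iff.2 fun k _ hk ↦ hx (hsub k hk)]
  have hcount := card_le_mul_sum_card_disjointed_div_card 2 hd hne hmono
  rw [Fintype.card_fin] at hcount
  calc (r : ℝ) / 2 * m ≤ m * ∑ k, (#(disjointed S k) : ℝ) / #(S k) := by nlinarith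
    _ = ∑ k, m * ((#(disjointed S k) : ℝ) / #(S k)) := mul_sum _ _ _
    _ ≤ ∑ k, min t (#(disjointed S k) : ℝ) := sum_le_sum fun k _ ↦
        mul_div_le_min hm0 (min_le_left _ _) (hm_le k)
          (Nat.cast_nonneg _) (mod_cast card_le_card (disjointed_le S k))
          (mod_cast (hne k).card_pos)
end

section
/- Let N = n and let f₁, ..., f_n be i.i.d. random vectors, each uniformly distributed on the canonical basis {e₁, ..., e_n} of ℂ^n. Then E ∘ tr (f₁ ⊗ f₁ + ... + f_n ⊗ f_n)^p → B_p as n → ∞, where B_p is the p-th Bell number. -/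
/-!
Almost surely `f i = e (g i)` for a uniformly distributed `g : Fin n → Fin n`; then
`S = ∑ i, f i ⊗ f i` is diagonal with entries the fibre sizes `#(g⁻¹ j)`, so
`𝔼 tr S ^ p = 𝔼 #(g⁻¹ j) ^ p`. Counting `#(g⁻¹ j) ^ p` as the number of `t : Fin p → Fin n`
with `g ∘ t ≡ j`, this moment is `∑ t, n ^ (-#(range t))`. Exactly `n (n - 1) ⋯ (n - k + 1)`
maps `t` have a given kernel partition with `k` blocks, so the moment is
`∑ π, n.descFactorial #π / n ^ #π`, and each of its `B_p` summands tends to `1`.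
-/

open MeasureTheory ProbabilityTheory Filter
open scoped InnerProductSpace

/-- The rank-one operator `u ⊗ v : x ↦ ⟨x, v⟩ u` (inner product conjugate-linear
in the second argument, i.e. `⟪v, x⟫` in Mathlib's convention). -/
noncomputable def rankOne {n : ℕ} (u v : EuclideanSpace ℂ (Fin n)) :
    EuclideanSpace ℂ (Fin n) →L[ℂ] EuclideanSpace ℂ (Fin n) :=
  (innerSL ℂ v).smulRight u

/-- The `p`-th Bell number: the number of set partitions of `{1, …, p}`. -/
noncomputable def bell (p : ℕ) : ℕ :=
  Nat.card (Finpartition (Finset.univ : Finset (Fin p)))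

open Finset

namespace Finpartition

variable {α : Type*} [DecidableEq α] {s : Finset α}

theorem ext_of_part_eq {P Q : Finpartition s} (h : ∀ a ∈ s, P.part a = Q.part a) : P = Q := by
  have parts_subset : ∀ {P Q : Finpartition s}, (∀ a ∈ s, P.part a = Q.part a) →
      P.parts ⊆ Q.parts := fun {P Q} h b hb => by
    obtain ⟨a, ha⟩ := P.nonempty_of_mem_parts hb
    have has : a ∈ s := P.le hb ha
    rw [← P.part_eq_of_mem hb ha, h a has]
    exact Q.part_mem.2 has
  exact Finpartition.ext <|
    subset_antisymm (parts_subset h) (parts_subset fun a ha => (h a ha).symm)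

end Finpartition

noncomputable def embeddingEquivOfSurjective {α β γ : Type*} {q : α → γ}
    (hq : Function.Surjective q) :
    {t : α → β // ∀ a b, t a = t b ↔ q a = q b} ≃ (γ ↪ β) where
  toFun t := ⟨t.1 ∘ Function.surjInv hq, fun y y' h => by
    simpa [Function.surjInv_eq hq] using (t.2 _ _).1 h⟩
  invFun e := ⟨e ∘ q, fun a b => e.injective.eq_iff⟩
  left_inv t := Subtype.ext <| funext fun a => (t.2 _ _).2 (Function.surjInv_eq hq (q a))
  right_inv e := by
    ext y
    exact congrArg e (Function.surjInv_eq hq y)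

section KernelPartition

variable {α β : Type*} [Fintype α] [DecidableEq α] [DecidableEq β]

def kernelPartition (t : α → β) : Finpartition (univ : Finset α) :=
  letI : DecidableRel (Setoid.ker t).r := fun a b => decEq (t a) (t b)
  Finpartition.ofSetoid (Setoid.ker t)

theorem mem_part_kernelPartition {t : α → β} {a b : α} :
    b ∈ (kernelPartition t).part a ↔ t a = t b :=
  Finpartition.mem_part_ofSetoid_iff_rel

theorem kernelPartition_eq_iff {t : α → β} {P : Finpartition (univ : Finset α)} :
    kernelPartition t = P ↔ ∀ a b, t a = t b ↔ P.part a = P.part b := by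
  have hP : ∀ a b, b ∈ P.part a ↔ P.part a = P.part b := fun a b => by
    rw [P.mem_part_iff_part_eq_part (mem_univ b) (mem_univ a), eq_comm]
  refine ⟨?_, fun h => Finpartition.ext_of_part_eq fun a _ => ?_⟩
  · rintro rfl a b
    rw [← hP, mem_part_kernelPartition]
  · ext b
    rw [mem_part_kernelPartition, h, hP]

theorem part_kernelPartition (t : α → β) (a : α) :
    (kernelPartition t).part a = ({b | t b = t a} : Finset α) := by
  ext b
  rw [mem_part_kernelPartition, mem_filter, eq_comm]
  simp

theorem card_image_eq_card_parts_kernelPartition (t : α → β) :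
    #(univ.image t) = #(kernelPartition t).parts := by
  refine card_nbij (fun y => ({b | t b = y} : Finset α)) ?_ ?_ ?_
  · intro y hy
    obtain ⟨a, -, rfl⟩ := mem_image.1 hy
    simp only [mem_coe, ← part_kernelPartition]
    exact (kernelPartition t).part_mem.2 (mem_univ a)
  · intro y hy y' _ h
    obtain ⟨a, -, rfl⟩ := mem_image.1 hy
    simpa using (Finset.ext_iff.1 h a).1
  · intro P hP
    obtain ⟨a, -, rfl⟩ := (kernelPartition t).part_surjOn hP
    exact ⟨t a, by simp, (part_kernelPartition t a).symm⟩

theorem card_kernelPartition_eq [Fintype β] (P : Finpartition (univ : Finset α)) :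
    #{t : α → β | kernelPartition t = P} = (Fintype.card β).descFactorial #P.parts := by
  have hq : Function.Surjective fun a => (⟨P.part a, P.part_mem.2 (mem_univ a)⟩ : P.parts) :=
    fun ⟨b, hb⟩ => by
      obtain ⟨a, -, rfl⟩ := P.part_surjOn hb
      exact ⟨a, rfl⟩
  rw [← Fintype.card_subtype, ← Fintype.card_coe P.parts, ← Fintype.card_embedding_eq,
    ← Fintype.card_congr (embeddingEquivOfSurjective hq)]
  exact Fintype.card_congr (Equiv.subtypeEquivRight fun t => by
    simp only [kernelPartition_eq_iff, Subtype.mk.injEq])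

theorem sum_comp_card_image [Fintype β] {M : Type*} [AddCommMonoid M] (F : ℕ → M) :
    ∑ t : α → β, F #(univ.image t) =
      ∑ P : Finpartition (univ : Finset α),
        (Fintype.card β).descFactorial #P.parts • F #P.parts := by
  rw [← sum_fiberwise univ kernelPartition]
  refine sum_congr rfl fun P _ => ?_
  rw [← card_kernelPartition_eq, ← sum_const]
  refine sum_congr rfl fun t ht => ?_
  rw [card_image_eq_card_parts_kernelPartition, (mem_filter.1 ht).2]

end KernelPartition

section Counting

variable {α β : Type*} [Fintype α] [DecidableEq β]

theorem card_fiber_pow (g : α → β) (b : β) (p : ℕ) :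
    #{a | g a = b} ^ p = #{t : Fin p → α | ∀ k, g (t k) = b} := by
  rw [← Fintype.card_piFinset_const]
  congr 1
  ext t
  simp [Fintype.mem_piFinset]

theorem card_forall_mem_eq_const [DecidableEq α] [Fintype β] (s : Finset α) (b : β) :
    #{g : α → β | ∀ a ∈ s, g a = b} = Fintype.card β ^ #sᶜ := by
  have : ({g : α → β | ∀ a ∈ s, g a = b} : Finset (α → β)) =
      Fintype.piFinset fun a => if a ∈ s then {b} else univ := by
    ext g
    simp only [mem_filter, mem_univ, true_and, Fintype.mem_piFinset]
    refine forall_congr' fun a => ?_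
    split_ifs <;> simp [*]
  simp [this, apply_ite card, prod_ite, filter_not, compl_eq_univ_sdiff]

theorem sum_card_fiber_pow [DecidableEq α] [Fintype β] (b : β) (p : ℕ) :
    ∑ g : α → β, #{a | g a = b} ^ p =
      ∑ t : Fin p → α, Fintype.card β ^ #(univ.image t)ᶜ := by
  simp_rw [card_fiber_pow, card_filter]
  rw [sum_comm]
  refine sum_congr rfl fun t _ => ?_
  rw [← card_filter, ← card_forall_mem_eq_const _ b]
  congr 1
  ext g
  simp

end Counting

theorem sum_weighted_card_fiber_pow_eq_sum_inv_pow_card_image {n : ℕ} (hn : n ≠ 0) (p : ℕ) :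
    ∑ g : Fin n → Fin n, ((n : ℝ)⁻¹ ^ n) • ((n : ℂ)⁻¹ * ∑ j, (#{i | g i = j} : ℂ) ^ p) =
      ∑ t : Fin p → Fin n, ((n : ℂ) ^ #(univ.image t))⁻¹ := by
  have hcount : ∀ j : Fin n, ∑ g : Fin n → Fin n, (#{i | g i = j} : ℂ) ^ p =
      ∑ t : Fin p → Fin n, (n : ℂ) ^ #(univ.image t)ᶜ := fun j => by
    exact_mod_cast Fintype.card_fin n ▸ sum_card_fiber_pow (α := Fin n) j p
  rw [← smul_sum, ← mul_sum, sum_comm]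
  simp only [hcount, sum_const, card_univ, Fintype.card_fin, nsmul_eq_mul, Complex.real_smul,
    mul_sum]
  refine sum_congr rfl fun t _ => ?_
  have hsplit : (n : ℂ) ^ #(univ.image t)ᶜ * (n : ℂ) ^ #(univ.image t) = (n : ℂ) ^ n := by
    rw [← pow_add, card_compl_add_card, Fintype.card_fin]
  have hn' : (n : ℂ) ≠ 0 := Nat.cast_ne_zero.2 hn
  push_cast
  field_simp
  rw [mul_assoc, hsplit, one_div, ← mul_pow, inv_mul_cancel₀ hn', one_pow]

theorem LinearMap.trace_eq_sum_of_apply_basis {R M ι : Type*} [CommRing R] [AddCommGroup M]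
    [Module R M] [Fintype ι] [DecidableEq ι] (b : Module.Basis ι R M) {T : M →ₗ[R] M}
    {c : ι → R} (hT : ∀ i, T (b i) = c i • b i) :
    LinearMap.trace R M T = ∑ i, c i := by
  rw [LinearMap.trace_eq_matrix_trace R b, Matrix.trace]
  refine sum_congr rfl fun i _ => ?_
  simp [LinearMap.toMatrix_apply, hT]

theorem ContinuousLinearMap.pow_apply_of_apply_eq_smul {𝕜 E : Type*} [Semiring 𝕜]
    [TopologicalSpace E] [AddCommMonoid E] [Module 𝕜 E] {T : E →L[𝕜] E} {v : E} {c : 𝕜}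
    (hT : T v = c • v) (p : ℕ) : (T ^ p) v = c ^ p • v := by
  induction p with
  | zero => simp
  | succ p ih => rw [pow_succ, mul_apply_eq_comp, hT, map_smul, ih, smul_smul, pow_succ']

section RankOne

variable {n : ℕ}

theorem rankOne_apply (u v x : EuclideanSpace ℂ (Fin n)) : rankOne u v x = ⟪v, x⟫_ℂ • u := by
  simp [rankOne]

theorem sum_rankOne_single_apply {ι : Type*} [Fintype ι] (g : ι → Fin n) (j : Fin n) :
    (∑ i, rankOne (EuclideanSpace.single (g i) (1 : ℂ)) (EuclideanSpace.single (g i) 1))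
      (EuclideanSpace.single j 1) = (#{i | g i = j} : ℂ) • EuclideanSpace.single j 1 := by
  have hterm : ∀ i, rankOne (EuclideanSpace.single (g i) (1 : ℂ)) (EuclideanSpace.single (g i) 1)
      (EuclideanSpace.single j 1) = if g i = j then EuclideanSpace.single j 1 else 0 := by
    intro i
    by_cases h : g i = j <;> simp [rankOne_apply, EuclideanSpace.inner_single_left, h]
  rw [_root_.sum_apply, sum_congr rfl fun i _ => hterm i, sum_ite, sum_const_zero,
    add_zero, sum_const, Nat.cast_smul_eq_nsmul]

theorem trace_pow_sum_rankOne_single {ι : Type*} [Fintype ι] (g : ι → Fin n) (p : ℕ) :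
    LinearMap.trace ℂ (EuclideanSpace ℂ (Fin n))
      (((∑ i, rankOne (EuclideanSpace.single (g i) (1 : ℂ)) (EuclideanSpace.single (g i) 1)) ^ p :
        EuclideanSpace ℂ (Fin n) →L[ℂ] EuclideanSpace ℂ (Fin n))) =
      ∑ j, (#{i | g i = j} : ℂ) ^ p := by
  refine LinearMap.trace_eq_sum_of_apply_basis (EuclideanSpace.basisFun (Fin n) ℂ).toBasis
    fun j => ?_
  rw [OrthonormalBasis.coe_toBasis, EuclideanSpace.basisFun_apply]
  exact ContinuousLinearMap.pow_apply_of_apply_eq_smul (sum_rankOne_single_apply g j) p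

end RankOne

section PiecewiseConstant

variable {Ω ι : Type*} [MeasurableSpace Ω] {μ : Measure Ω} [Fintype ι] {A : ι → Set Ω}

theorem ae_mem_iUnion_of_sum_measure_eq_one [IsProbabilityMeasure μ]
    (hA : ∀ i, MeasurableSet (A i)) (hdisj : Pairwise (Function.onFun Disjoint A))
    (hsum : ∑ i, μ (A i) = 1) : ∀ᵐ ω ∂μ, ω ∈ ⋃ i, A i := by
  rw [ae_mem_iff_measure_eq (MeasurableSet.iUnion hA).nullMeasurableSet, measure_univ,
    measure_iUnion hdisj hA, tsum_fintype, hsum]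

theorem integral_eq_sum_of_ae_mem_iUnion {E : Type*} [NormedAddCommGroup E] [NormedSpace ℝ E]
    [CompleteSpace E] [IsFiniteMeasure μ] (hA : ∀ i, MeasurableSet (A i))
    (hdisj : Pairwise (Function.onFun Disjoint A)) (hcover : ∀ᵐ ω ∂μ, ω ∈ ⋃ i, A i)
    {F : Ω → E} {c : ι → E} (hF : ∀ i, ∀ ω ∈ A i, F ω = c i) :
    ∫ ω, F ω ∂μ = ∑ i, μ.real (A i) • c i := by
  classical
  have hF_ae : F =ᵐ[μ] fun ω => ∑ i, (A i).indicator (fun _ => c i) ω := by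
    filter_upwards [hcover] with ω hω
    obtain ⟨i, hi⟩ := Set.mem_iUnion.1 hω
    rw [sum_eq_single i, Set.indicator_of_mem hi, hF i ω hi]
    · exact fun j _ hji => Set.indicator_of_notMem (Set.disjoint_left.1 (hdisj hji.symm) hi) _
    · simp
  rw [integral_congr_ae hF_ae, integral_finsetSum _ fun i _ =>
    (integrable_const (c i)).indicator (hA i)]
  simp_rw [integral_indicator_const _ (hA _)]

end PiecewiseConstant

section Moment

variable {n : ℕ}

theorem EuclideanSpace.single_one_injective :
    Function.Injective fun j : Fin n => EuclideanSpace.single j (1 : ℂ) :=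
  fun i j h => by simpa using congrArg (· i) h

theorem integral_normalized_trace_pow_eq_sum (hn : n ≠ 0) (p : ℕ) {Ω : Type*}
    [MeasurableSpace Ω] {μ : Measure Ω} [IsProbabilityMeasure μ]
    [MeasurableSpace (EuclideanSpace ℂ (Fin n))] [BorelSpace (EuclideanSpace ℂ (Fin n))]
    {f : Fin n → Ω → EuclideanSpace ℂ (Fin n)} (hmeas : ∀ i, Measurable (f i))
    (hindep : iIndepFun f μ)
    (hunif : ∀ i j, μ {ω | f i ω = EuclideanSpace.single j (1 : ℂ)} = (n : ENNReal)⁻¹) :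
    ∫ ω, (n : ℂ)⁻¹ * LinearMap.trace ℂ (EuclideanSpace ℂ (Fin n))
        (((∑ i, rankOne (f i ω) (f i ω)) ^ p :
          EuclideanSpace ℂ (Fin n) →L[ℂ] EuclideanSpace ℂ (Fin n))) ∂μ =
      ∑ g : Fin n → Fin n, ((n : ℝ)⁻¹ ^ n) • ((n : ℂ)⁻¹ * ∑ j, (#{i | g i = j} : ℂ) ^ p) := by
  set A : (Fin n → Fin n) → Set Ω := fun g => ⋂ i, f i ⁻¹' {EuclideanSpace.single (g i) 1}
  have hA : ∀ g, MeasurableSet (A g) := fun g =>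
    MeasurableSet.iInter fun i => hmeas i (measurableSet_singleton _)
  have hμA : ∀ g, μ (A g) = (n : ENNReal)⁻¹ ^ n := fun g => by
    rw [hindep.meas_iInter fun i => ⟨_, measurableSet_singleton _, rfl⟩]
    simp [Set.preimage, hunif]
  have hdisj : Pairwise (Function.onFun Disjoint A) := fun g g' hgg' => by
    obtain ⟨i, hi⟩ := Function.ne_iff.1 hgg'
    refine Set.disjoint_left.2 fun ω hω hω' => hi (EuclideanSpace.single_one_injective ?_)
    exact (Set.mem_iInter.1 hω i).symm.trans (Set.mem_iInter.1 hω' i)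
  have hcover : ∀ᵐ ω ∂μ, ω ∈ ⋃ g, A g := by
    refine ae_mem_iUnion_of_sum_measure_eq_one hA hdisj ?_
    simp only [hμA, sum_const, card_univ, Fintype.card_fun, Fintype.card_fin, nsmul_eq_mul]
    push_cast
    rw [← mul_pow, ENNReal.mul_inv_cancel (by exact_mod_cast hn) (ENNReal.natCast_ne_top n),
      one_pow]
  rw [integral_eq_sum_of_ae_mem_iUnion hA hdisj hcover
    (c := fun g => (n : ℂ)⁻¹ * ∑ j, (#{i | g i = j} : ℂ) ^ p)]
  · simp [measureReal_def, hμA]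
  · intro g ω hω
    have hf : ∀ i, f i ω = EuclideanSpace.single (g i) 1 := fun i => Set.mem_iInter.1 hω i
    simp only [hf, trace_pow_sum_rankOne_single]

end Moment

theorem tendsto_descFactorial_div_pow (k : ℕ) :
    Tendsto (fun n : ℕ => (n.descFactorial k : ℂ) / (n : ℂ) ^ k) atTop (nhds 1) := by
  have hz : ∀ᶠ n : ℕ in atTop, (n : ℝ) ^ k ≠ 0 :=
    (eventually_ne_atTop 0).mono fun n hn => pow_ne_zero _ (Nat.cast_ne_zero.2 hn)
  have hreal := (Asymptotics.isEquivalent_iff_tendsto_one hz).1 (isEquivalent_descFactorial k)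
  simpa [Function.comp_def] using (Complex.continuous_ofReal.tendsto 1).comp hreal

theorem tendsto_sum_descFactorial_div_pow_bell (p : ℕ) :
    Tendsto (fun n : ℕ => ∑ P : Finpartition (univ : Finset (Fin p)),
      n.descFactorial #P.parts • ((n : ℂ) ^ #P.parts)⁻¹) atTop (nhds (bell p : ℂ)) := by
  have hsum := tendsto_finsetSum univ fun (P : Finpartition (univ : Finset (Fin p))) _ =>
    tendsto_descFactorial_div_pow #P.parts
  simpa [bell, Nat.card_eq_fintype_card, nsmul_eq_mul, div_eq_mul_inv] using hsum

theorem stmt15 (p : ℕ)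
    (Ω : ℕ → Type) (_ : ∀ n, MeasureSpace (Ω n))
    (_ : ∀ n, IsProbabilityMeasure (volume : Measure (Ω n)))
    (inst : ∀ n, MeasurableSpace (EuclideanSpace ℂ (Fin n)))
    (_ : ∀ n, BorelSpace (EuclideanSpace ℂ (Fin n)))
    (f : ∀ n, Fin n → Ω n → EuclideanSpace ℂ (Fin n))
    (hmeas : ∀ n i, Measurable (f n i))
    (hindep : ∀ n, iIndepFun (m := fun _ => inst n) (f n) volume)
    (hunif : ∀ n, ∀ i : Fin n, ∀ j : Fin n,
      volume {ω | f n i ω = EuclideanSpace.single j (1 : ℂ)} = (n : ENNReal)⁻¹) :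
    Tendsto (fun n : ℕ => ∫ ω, (n : ℂ)⁻¹ * LinearMap.trace ℂ (EuclideanSpace ℂ (Fin n))
        (((∑ i : Fin n, rankOne (f n i ω) (f n i ω)) ^ p :
          EuclideanSpace ℂ (Fin n) →L[ℂ] EuclideanSpace ℂ (Fin n))))
      atTop (nhds ((bell p : ℂ))) := by
  refine (tendsto_sum_descFactorial_div_pow_bell p).congr'
    ((eventually_ne_atTop 0).mono fun n hn => ?_)
  dsimp only
  rw [integral_normalized_trace_pow_eq_sum hn p (hmeas n) (hindep n) (hunif n),
    sum_weighted_card_fiber_pow_eq_sum_inv_pow_card_image hn,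
    sum_comp_card_image fun k => ((n : ℂ) ^ k)⁻¹,
    Fintype.card_fin]
end
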